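/- Rule R9 (variable inclusion) is locally complete: for distinct variables X, Y, a fresh variable X', and words u, v over Σ ∪ Γ, if the equation (X'·u)[X ↦ Y·X'] = v[X ↦ Y·X'] is satisfiable, then the equation X·u = Y·v is satisfiable. -/

import Mathlib

/-!
Given a solution `h` of the transformed equation, the substitution that sends `X` to
`h Y · h X'` and agrees with `h` elsewhere solves `X·u = Y·v`: applying it to a word is the
same as applying `h` after the replacement `X ↦ Y·X'`, so it maps `u` and `v` to `h` of their
transforms, and the transformed equation says exactly `h X' · h(u[X ↦ Y·X']) = h(v[X ↦ Y·X'])`.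
-/

/-- Extension of a substitution `h : Γ → Σ*` to a monoid homomorphism on words over `Σ ∪ Γ`
that fixes letters of the alphabet. -/
def applySub {A V : Type} (h : V → List A) (u : List (A ⊕ V)) : List A :=
  u.flatMap (Sum.elim (fun a => [a]) h)

/-- Homomorphic replacement `u[X ↦ w]` of the variable `X` by the word `w` in `u`. -/
def repl {A V : Type} [DecidableEq V] (X : V) (w : List (A ⊕ V)) (u : List (A ⊕ V)) :
    List (A ⊕ V) :=
  u.flatMap (Sum.elim (fun a => [Sum.inl a]) (fun Y => if Y = X then w else [Sum.inr Y]))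

section Substitution

variable {A V : Type}

@[simp]
lemma applySub_nil (h : V → List A) : applySub h [] = [] := rfl

@[simp]
lemma applySub_cons_inl (h : V → List A) (a : A) (t : List (A ⊕ V)) :
    applySub h (Sum.inl a :: t) = a :: applySub h t := rfl

@[simp]
lemma applySub_cons_inr (h : V → List A) (Z : V) (t : List (A ⊕ V)) :
    applySub h (Sum.inr Z :: t) = h Z ++ applySub h t := rfl

@[simp]
lemma applySub_append (h : V → List A) (s t : List (A ⊕ V)) :
    applySub h (s ++ t) = applySub h s ++ applySub h t := by
  simp [applySub]

lemma applySub_repl [DecidableEq V] (h : V → List A) (X : V) (w u : List (A ⊕ V)) :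
    applySub h (repl X w u) = applySub (Function.update h X (applySub h w)) u := by
  induction u with
  | nil => rfl
  | cons a t ih =>
    rcases a with a | Z
    · simpa [repl] using ih
    · by_cases hZ : Z = X
      · subst hZ
        simpa [repl] using ih
      · simpa [repl, hZ] using ih

end Substitution

theorem stmt_7_general {A V : Type} [DecidableEq V] (X Y X' : V) (u v : List (A ⊕ V))
    (hXY : X ≠ Y) (hX'X : X' ≠ X)
    (hsat : ∃ h : V → List A,
      applySub h (repl X [Sum.inr Y, Sum.inr X'] (Sum.inr X' :: u)) =
        applySub h (repl X [Sum.inr Y, Sum.inr X'] v)) :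
    ∃ h : V → List A, applySub h (Sum.inr X :: u) = applySub h (Sum.inr Y :: v) := by
  obtain ⟨h, hh⟩ := hsat
  refine ⟨Function.update h X (h Y ++ h X'), ?_⟩
  simp only [applySub_repl, applySub_cons_inr, applySub_nil, List.append_nil,
    Function.update_of_ne hX'X] at hh
  simp only [applySub_cons_inr, Function.update_self, Function.update_of_ne hXY.symm,
    List.append_assoc, hh]

/-- Rule R9 (variable inclusion) is locally complete. -/
theorem stmt_7 {A V : Type} [DecidableEq V] (X Y X' : V) (u v : List (A ⊕ V))
    (hXY : X ≠ Y) (hX'X : X' ≠ X) (hX'Y : X' ≠ Y)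
    (hX'u : Sum.inr X' ∉ u) (hX'v : Sum.inr X' ∉ v)
    (hsat : ∃ h : V → List A,
      applySub h (repl X [Sum.inr Y, Sum.inr X'] (Sum.inr X' :: u)) =
        applySub h (repl X [Sum.inr Y, Sum.inr X'] v)) :
    ∃ h : V → List A, applySub h (Sum.inr X :: u) = applySub h (Sum.inr Y :: v) :=
  stmt_7_general X Y X' u v hXY hX'X hsat
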